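/- Let q be a complex number with |q| < 1, and let x, y, z, w be complex numbers with |x| < 1, |y| < 1, |z| < 1, |w| < 1, y ≠ 1, and such that z q^r ≠ 1 and w q^r ≠ 1 for every natural number r. Then A(x,y,z,w;q) = z·A(x, yq, z, w; q) + L(xy, w; q)/(1 − y). -/

import Mathlib

/-- The double Lambert series `A(x,y,z,w;q)`, written with `m = n + j`. -/
noncomputable def doubleLambert (x y z w q : ℂ) : ℂ :=
  ∑' n : ℕ, ∑' j : ℕ,
    x ^ n * y ^ (n + j) / ((1 - w * q ^ n) * (1 - z * q ^ (n + j)))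

/-- The single Lambert series `L(x,y;q)` with one denominator factor. -/
noncomputable def lambert1 (x y q : ℂ) : ℂ :=
  ∑' n : ℕ, x ^ n / (1 - y * q ^ n)

/-- The single Lambert series `L(x,y₁,y₂;q)` with two denominator factors. -/
noncomputable def lambert2 (x y₁ y₂ q : ℂ) : ℂ :=
  ∑' n : ℕ, x ^ n / ((1 - y₁ * q ^ n) * (1 - y₂ * q ^ n))

lemma denom_lb {a q : ℂ} (ha : ‖a‖ < 1) (hq : ‖q‖ < 1) (r : ℕ) :
    1 - ‖a‖ ≤ ‖(1 : ℂ) - a * q ^ r‖ := by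
  have h1 : ‖a * q ^ r‖ ≤ ‖a‖ := by
    rw [norm_mul, norm_pow]
    have : ‖q‖ ^ r ≤ 1 := pow_le_one₀ (norm_nonneg q) hq.le
    nlinarith [norm_nonneg a]
  have h2 : ‖(1 : ℂ)‖ - ‖a * q ^ r‖ ≤ ‖(1 : ℂ) - a * q ^ r‖ := norm_sub_norm_le _ _
  simp only [norm_one] at h2
  linarith

lemma term_bound {x y z w q : ℂ} (hq : ‖q‖ < 1) (hz : ‖z‖ < 1) (hw : ‖w‖ < 1) (n j : ℕ) :
    ‖x ^ n * y ^ (n + j) / ((1 - w * q ^ n) * (1 - z * q ^ (n + j)))‖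
      ≤ (‖x‖ ^ n * ‖y‖ ^ n / ((1 - ‖w‖) * (1 - ‖z‖))) * ‖y‖ ^ j := by
  have hw0 : (0:ℝ) < 1 - ‖w‖ := by linarith
  have hz0 : (0:ℝ) < 1 - ‖z‖ := by linarith
  have hd : (1 - ‖w‖) * (1 - ‖z‖) ≤ ‖(1 - w * q ^ n) * (1 - z * q ^ (n + j))‖ := by
    rw [norm_mul]
    exact mul_le_mul (denom_lb hw hq n) (denom_lb hz hq (n + j)) hz0.le
      ((hw0.le).trans (denom_lb hw hq n))
  rw [norm_div, norm_mul, norm_pow, norm_pow, pow_add, div_mul_eq_mul_div]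
  rw [show ‖x‖ ^ n * (‖y‖ ^ n * ‖y‖ ^ j) = ‖x‖ ^ n * ‖y‖ ^ n * ‖y‖ ^ j by ring]
  gcongr
  all_goals first | exact hd | exact mul_pos hw0 hz0 | positivity

lemma tsum_norm_bound {f : ℕ → ℂ} {C r : ℝ} (hr0 : 0 ≤ r) (hr : r < 1)
    (h : ∀ j, ‖f j‖ ≤ C * r ^ j) : ‖∑' j, f j‖ ≤ C / (1 - r) := by
  have hs : Summable fun j : ℕ => C * r ^ j :=
    (summable_geometric_of_lt_one hr0 hr).mul_left C
  calc ‖∑' j, f j‖ ≤ ∑' j : ℕ, C * r ^ j := tsum_of_norm_bounded hs.hasSum h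
    _ = C * (1 - r)⁻¹ := by rw [tsum_mul_left, tsum_geometric_of_lt_one hr0 hr]
    _ = C / (1 - r) := (div_eq_mul_inv _ _).symm

lemma inner_summable {x y z w q : ℂ} (hq : ‖q‖ < 1) (hy : ‖y‖ < 1) (hz : ‖z‖ < 1)
    (hw : ‖w‖ < 1) (n : ℕ) :
    Summable fun j : ℕ => x ^ n * y ^ (n + j) / ((1 - w * q ^ n) * (1 - z * q ^ (n + j))) := by
  apply Summable.of_norm_bounded
    (((summable_geometric_of_lt_one (norm_nonneg y) hy).mul_left
      (‖x‖ ^ n * ‖y‖ ^ n / ((1 - ‖w‖) * (1 - ‖z‖)))))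
  exact fun j => term_bound hq hz hw n j

theorem stmt3 (q x y z w : ℂ) (hq : ‖q‖ < 1)
    (hx : ‖x‖ < 1) (hy : ‖y‖ < 1)
    (hz : ‖z‖ < 1) (hw : ‖w‖ < 1) (hy1 : y ≠ 1)
    (hz' : ∀ r : ℕ, z * q ^ r ≠ 1) (hw' : ∀ r : ℕ, w * q ^ r ≠ 1) :
    doubleLambert x y z w q =
      z * doubleLambert x (y * q) z w q + lambert1 (x * y) w q / (1 - y) := by
  have hw0 : (0:ℝ) < 1 - ‖w‖ := by linarith
  have hz0 : (0:ℝ) < 1 - ‖z‖ := by linarith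
  have hyq : ‖y * q‖ < 1 := by
    rw [norm_mul]
    nlinarith [norm_nonneg y, norm_nonneg q]
  have hy1' : (1 : ℂ) - y ≠ 0 := fun h => hy1 (by linear_combination -h)
  -- denominators nonzero
  have hdw : ∀ r : ℕ, (1 : ℂ) - w * q ^ r ≠ 0 := fun r h => hw' r (by linear_combination -h)
  have hdz : ∀ r : ℕ, (1 : ℂ) - z * q ^ r ≠ 0 := fun r h => hz' r (by linear_combination -h)
  -- pointwise split
  have hsplit : ∀ n j : ℕ,
      x ^ n * y ^ (n + j) / ((1 - w * q ^ n) * (1 - z * q ^ (n + j)))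
        = (x ^ n * y ^ n / (1 - w * q ^ n)) * y ^ j
          + z * (x ^ n * (y * q) ^ (n + j) / ((1 - w * q ^ n) * (1 - z * q ^ (n + j)))) := by
    intro n j
    have d1 := hdw n
    have d2 := hdz (n + j)
    field_simp
    ring
  -- summability of the second piece, per n
  have hsum2 : ∀ n : ℕ, Summable fun j : ℕ =>
      z * (x ^ n * (y * q) ^ (n + j) / ((1 - w * q ^ n) * (1 - z * q ^ (n + j)))) :=
    fun n => (inner_summable hq hyq hz hw n).mul_left z
  -- summability of the first piece, per n
  have hsum1 : ∀ n : ℕ, Summable fun j : ℕ => (x ^ n * y ^ n / (1 - w * q ^ n)) * y ^ j :=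
    fun n => (summable_geometric_of_norm_lt_one hy).mul_left _
  -- inner tsum computation
  have step1 : ∀ n : ℕ,
      (∑' j : ℕ, x ^ n * y ^ (n + j) / ((1 - w * q ^ n) * (1 - z * q ^ (n + j))))
        = (x ^ n * y ^ n / (1 - w * q ^ n)) * (1 - y)⁻¹
          + z * ∑' j : ℕ, x ^ n * (y * q) ^ (n + j)
                / ((1 - w * q ^ n) * (1 - z * q ^ (n + j))) := by
    intro n
    rw [tsum_congr (hsplit n), Summable.tsum_add (hsum1 n) (hsum2 n), tsum_mul_left,
      tsum_mul_left, tsum_geometric_of_norm_lt_one hy]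
  -- Summability of the two outer sequences
  have hA : Summable fun n : ℕ => (x ^ n * y ^ n / (1 - w * q ^ n)) * (1 - y)⁻¹ := by
    apply Summable.of_norm_bounded
      (((summable_geometric_of_lt_one (by positivity) (by nlinarith [norm_nonneg x, norm_nonneg y] : ‖x‖ * ‖y‖ < 1)).mul_left
        (‖(1 - y)⁻¹‖ / (1 - ‖w‖))))
    intro n
    rw [norm_mul, norm_div, norm_mul, norm_pow, norm_pow]
    have hd := denom_lb hw hq n
    have h1 : ‖x‖ ^ n * ‖y‖ ^ n / ‖1 - w * q ^ n‖ ≤ (‖x‖ * ‖y‖) ^ n / (1 - ‖w‖) := by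
      rw [mul_pow]
      exact div_le_div₀ (by positivity) le_rfl hw0 hd
    calc ‖x‖ ^ n * ‖y‖ ^ n / ‖1 - w * q ^ n‖ * ‖(1 - y)⁻¹‖
        ≤ (‖x‖ * ‖y‖) ^ n / (1 - ‖w‖) * ‖(1 - y)⁻¹‖ :=
          mul_le_mul_of_nonneg_right h1 (norm_nonneg _)
      _ = ‖(1 - y)⁻¹‖ / (1 - ‖w‖) * (‖x‖ * ‖y‖) ^ n := by ring
  have hB : Summable fun n : ℕ =>
      z * ∑' j : ℕ, x ^ n * (y * q) ^ (n + j) / ((1 - w * q ^ n) * (1 - z * q ^ (n + j))) := by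
    apply Summable.of_norm_bounded
      (((summable_geometric_of_lt_one (by positivity)
          (by nlinarith [norm_nonneg x, norm_nonneg (y*q)] : ‖x‖ * ‖y * q‖ < 1)).mul_left
        (‖z‖ / ((1 - ‖w‖) * (1 - ‖z‖)) / (1 - ‖y * q‖))))
    intro n
    rw [norm_mul]
    have hb : ‖∑' j : ℕ, x ^ n * (y * q) ^ (n + j)
        / ((1 - w * q ^ n) * (1 - z * q ^ (n + j)))‖
        ≤ (‖x‖ ^ n * ‖y * q‖ ^ n / ((1 - ‖w‖) * (1 - ‖z‖))) / (1 - ‖y * q‖) :=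
      tsum_norm_bound (norm_nonneg _) hyq (fun j => term_bound hq hz hw n j)
    calc ‖z‖ * ‖∑' j : ℕ, x ^ n * (y * q) ^ (n + j)
          / ((1 - w * q ^ n) * (1 - z * q ^ (n + j)))‖
        ≤ ‖z‖ * ((‖x‖ ^ n * ‖y * q‖ ^ n / ((1 - ‖w‖) * (1 - ‖z‖))) / (1 - ‖y * q‖)) :=
          mul_le_mul_of_nonneg_left hb (norm_nonneg z)
      _ = ‖z‖ / ((1 - ‖w‖) * (1 - ‖z‖)) / (1 - ‖y * q‖) * (‖x‖ * ‖y * q‖) ^ n := by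
          rw [mul_pow]; ring
  -- main computation
  have hL : (∑' n : ℕ, x ^ n * y ^ n / (1 - w * q ^ n) * (1 - y)⁻¹)
      = lambert1 (x * y) w q / (1 - y) := by
    rw [lambert1, div_eq_mul_inv, ← tsum_mul_right]
    exact tsum_congr fun n => by rw [mul_pow]
  rw [doubleLambert, tsum_congr step1, Summable.tsum_add hA hB, tsum_mul_left, hL, doubleLambert]
  ring
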